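/- Let {p_j} enumerate a set of primes of natural density 1/4 in increasing order and d_n = (∏_{j=1}^n (1+p_j))². Then for every t < 1 there exists a constant c_t > 0 such that 2^{2n} ≥ c_t · exp((log d_n)^t) for all n. -/

import Mathlib

/-!
Since `P ∩ [0, p n]` has `n + 1` elements, density `1/4` gives `π (p n) ≤ 5 (n + 1)` for
large `n`, and Chebyshev's lower bound `√x ≤ π x` (large `x`) then makes `p n` polynomial in `n`.
Hence `log d n ≤ 2 n log (1 + p n) = O(n log n)`, so `(log d n) ^ t = o(n)` for `t < 1`.
Thus `2 ^ (2 n) / exp ((log d n) ^ t) → ∞`, and its least value is the constant.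
-/

open Filter Asymptotics Real

theorem isLittleO_sqrt_mul_log_add_log :
    (fun x : ℝ => √x * log x + log (x + 1)) =o[atTop] id := by
  have hsqrt : (fun x : ℝ => √x * log x) =o[atTop] id := by
    refine ((isBigO_refl sqrt atTop).mul_isLittleO
      (isLittleO_log_rpow_atTop (by norm_num : (0 : ℝ) < 1 / 2))).trans_eventuallyEq ?_
    filter_upwards [eventually_ge_atTop 0] with x hx
    simp only [← sqrt_eq_rpow, mul_self_sqrt hx, id]
  have hlog : (fun x : ℝ => log (x + 1)) =o[atTop] id := by
    have h := isLittleO_log_id_atTop.comp_tendsto (tendsto_atTop_add_const_right _ 1 tendsto_id)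
    exact h.trans_isBigO ((isBigO_refl id atTop).add (isLittleO_const_id_atTop 1).isBigO)
  exact hsqrt.add hlog

theorem eventually_sqrt_le_primeCounting :
    ∀ᶠ n : ℕ in atTop, √(n : ℝ) ≤ Nat.primeCounting n := by
  have hbound := (isLittleO_sqrt_mul_log_add_log.bound (log_pos one_lt_two)).natCast_atTop
  filter_upwards [hbound, eventually_ge_atTop 2] with n hn hn2
  have hlogn : 0 < log n := log_pos (by exact_mod_cast hn2)
  refine le_trans ?_ (Chebyshev.pi_ge n)
  rw [le_div_iff₀ hlogn]
  have := (le_abs_self _).trans hn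
  rw [id, norm_of_nonneg (by positivity)] at this
  linarith

theorem isLittleO_mul_log_rpow {s : ℝ} (hs : s < 1) :
    (fun x : ℝ => (x * log x) ^ s) =o[atTop] id := by
  refine ((isBigO_refl (fun x : ℝ => x ^ s) atTop).mul_isLittleO
    (isLittleO_log_rpow_rpow_atTop s (sub_pos.2 hs))).congr' ?_ ?_
  · filter_upwards [eventually_ge_atTop 1] with x hx
    rw [mul_rpow (by linarith) (log_nonneg hx)]
  · filter_upwards [eventually_gt_atTop 0] with x hx
    rw [← rpow_add hx, add_sub_cancel, rpow_one, id]

section Enumeration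

variable {P : Set ℕ} [DecidablePred (· ∈ P)] {p : ℕ → ℕ}

theorem card_filter_mem_range_apply_succ (hmono : StrictMono p) (hrange : Set.range p = P)
    (n : ℕ) : ((Finset.range (p n + 1)).filter (· ∈ P)).card = n + 1 := by
  have himage : (Finset.range (p n + 1)).filter (· ∈ P) = (Finset.range (n + 1)).image p := by
    ext q
    simp only [Finset.mem_filter, Finset.mem_range, Finset.mem_image, Nat.lt_succ_iff, ← hrange,
      Set.mem_range]
    constructor
    · rintro ⟨hq, m, rfl⟩
      exact ⟨m, hmono.le_iff_le.1 hq, rfl⟩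
    · rintro ⟨m, hm, rfl⟩
      exact ⟨hmono.monotone hm, m, rfl⟩
  rw [himage, Finset.card_image_of_injective _ hmono.injective, Finset.card_range]

theorem eventually_primeCounting_apply_le (hmono : StrictMono p) (hrange : Set.range p = P)
    (hdens : Tendsto
      (fun N : ℕ => (((Finset.range (N + 1)).filter (· ∈ P)).card : ℝ)
        / (Nat.primeCounting N : ℝ)) atTop (nhds (1 / 4))) :
    ∀ᶠ n in atTop, (Nat.primeCounting (p n) : ℝ) ≤ 5 * (n + 1) := by
  filter_upwards [(hdens.comp hmono.tendsto_atTop).eventually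
    (lt_mem_nhds (by norm_num : (1 : ℝ) / 5 < 1 / 4))] with n hn
  rw [Function.comp_apply, card_filter_mem_range_apply_succ hmono hrange] at hn
  by_contra! hlarge
  rw [lt_div_iff₀ (by linarith)] at hn
  push_cast at hn
  linarith

theorem eventually_one_add_apply_le_pow_three (hmono : StrictMono p) (hrange : Set.range p = P)
    (hdens : Tendsto
      (fun N : ℕ => (((Finset.range (N + 1)).filter (· ∈ P)).card : ℝ)
        / (Nat.primeCounting N : ℝ)) atTop (nhds (1 / 4))) :
    ∀ᶠ n in atTop, (1 + p n : ℝ) ≤ (n : ℝ) ^ 3 := by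
  filter_upwards [eventually_primeCounting_apply_le hmono hrange hdens,
    hmono.tendsto_atTop.eventually eventually_sqrt_le_primeCounting,
    eventually_ge_atTop 30] with n hπ hsqrt h30
  have h30' : (30 : ℝ) ≤ n := by exact_mod_cast h30
  have hp : (p n : ℝ) ≤ (5 * (n + 1)) ^ 2 := by
    rw [← sq_sqrt (Nat.cast_nonneg (p n))]
    gcongr
    exact hsqrt.trans hπ
  nlinarith

end Enumeration

section Products

variable {p : ℕ → ℕ}

theorem le_prod_range_one_add (hp : StrictMono p) (n : ℕ) :
    n ≤ ∏ j ∈ Finset.range n, (1 + p j) := by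
  cases n with
  | zero => simp
  | succ m =>
    rw [Finset.prod_range_succ]
    calc m + 1 ≤ 1 + p m := by have : m ≤ p m := hp.id_le m; omega
      _ ≤ _ := Nat.le_mul_of_pos_left _ (Finset.prod_pos fun j _ => by omega)

theorem log_sq_prod_one_add_le (hp : Monotone p) (n : ℕ) :
    log (((∏ j ∈ Finset.range n, (1 + p j)) ^ 2 : ℕ) : ℝ) ≤ 2 * n * log (1 + p n) := by
  have hprod : (∏ j ∈ Finset.range n, (1 + p j)) ^ 2 ≤ (1 + p n) ^ (2 * n) := by
    rw [mul_comm, pow_mul]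
    gcongr
    simpa using Finset.prod_le_pow_card (Finset.range n) (fun j => 1 + p j) (1 + p n)
      fun j hj => by gcongr; exact hp (Finset.mem_range.1 hj).le
  calc log (((∏ j ∈ Finset.range n, (1 + p j)) ^ 2 : ℕ) : ℝ)
      ≤ log (((1 + p n) ^ (2 * n) : ℕ) : ℝ) :=
        log_le_log (by positivity) (by exact_mod_cast hprod)
    _ = 2 * n * log (1 + p n) := by push_cast; rw [log_pow]; push_cast; ring

end Products

section DensityQuarter

variable {P : Set ℕ} [DecidablePred (· ∈ P)] {p : ℕ → ℕ} {d : ℕ → ℕ}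

theorem tendsto_log_atTop_of_sq_prod (hmono : StrictMono p)
    (hd : ∀ n, d n = (∏ j ∈ Finset.range n, (1 + p j)) ^ 2) :
    Tendsto (fun n => log (d n)) atTop atTop := by
  have hle : ∀ n, n ≤ d n := fun n =>
    (hd n).symm ▸ (le_prod_range_one_add hmono n).trans (Nat.le_self_pow two_ne_zero _)
  exact tendsto_log_atTop.comp
    (tendsto_natCast_atTop_atTop.comp (tendsto_atTop_mono hle tendsto_id))

theorem isLittleO_log_rpow_of_density (hmono : StrictMono p) (hrange : Set.range p = P)
    (hdens : Tendsto
      (fun N : ℕ => (((Finset.range (N + 1)).filter (· ∈ P)).card : ℝ)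
        / (Nat.primeCounting N : ℝ)) atTop (nhds (1 / 4)))
    (hd : ∀ n, d n = (∏ j ∈ Finset.range n, (1 + p j)) ^ 2) {s : ℝ} (hs0 : 0 ≤ s)
    (hs1 : s < 1) :
    (fun n => log (d n) ^ s) =o[atTop] fun n => (n : ℝ) := by
  have hlog : ∀ᶠ n in atTop, log (d n) ≤ 6 * (n * log n) := by
    filter_upwards [eventually_one_add_apply_le_pow_three hmono hrange hdens] with n hn
    calc log (d n) ≤ 2 * n * log (1 + p n) := hd n ▸ log_sq_prod_one_add_le hmono.monotone n
      _ ≤ 2 * n * log ((n : ℝ) ^ 3) := by gcongr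
      _ = 6 * (n * log n) := by rw [log_pow]; push_cast; ring
  have hbig : (fun n => log (d n)) =O[atTop] fun n => (n : ℝ) * log n := by
    refine IsBigO.of_bound 6 ?_
    filter_upwards [hlog] with n hn
    rw [norm_of_nonneg (log_natCast_nonneg _), norm_of_nonneg (by positivity)]
    exact hn
  exact (hbig.rpow hs0 (Eventually.of_forall fun n => by positivity)).trans_isLittleO
    ((isLittleO_mul_log_rpow hs1).comp_tendsto tendsto_natCast_atTop_atTop)

theorem eventually_log_rpow_le_mul_log_two (hmono : StrictMono p) (hrange : Set.range p = P)
    (hdens : Tendsto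
      (fun N : ℕ => (((Finset.range (N + 1)).filter (· ∈ P)).card : ℝ)
        / (Nat.primeCounting N : ℝ)) atTop (nhds (1 / 4)))
    (hd : ∀ n, d n = (∏ j ∈ Finset.range n, (1 + p j)) ^ 2) {t : ℝ} (ht : t < 1) :
    ∀ᶠ n in atTop, log (d n) ^ t ≤ n * log 2 := by
  have hsmall := (isLittleO_log_rpow_of_density hmono hrange hdens hd (le_max_right t 0)
    (max_lt ht one_pos)).bound (log_pos one_lt_two)
  filter_upwards [hsmall, (tendsto_log_atTop_of_sq_prod hmono hd).eventually_ge_atTop 1]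
    with n hn h1
  calc log (d n) ^ t ≤ log (d n) ^ max t 0 := rpow_le_rpow_of_exponent_le h1 (le_max_left t 0)
    _ ≤ log 2 * ‖(n : ℝ)‖ := (le_norm_self _).trans hn
    _ = n * log 2 := by rw [Real.norm_natCast, mul_comm]

end DensityQuarter

theorem two_pow_ge_exp_log_pow_of_density_quarter_general
    (P : Set ℕ) [DecidablePred (· ∈ P)]
    (hdens : Tendsto
      (fun N : ℕ => (((Finset.range (N + 1)).filter (· ∈ P)).card : ℝ)
        / (Nat.primeCounting N : ℝ)) atTop (nhds (1 / 4)))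
    (p : ℕ → ℕ) (hmono : StrictMono p) (hrange : Set.range p = P)
    (d : ℕ → ℕ) (hd : ∀ n, d n = (∏ j ∈ Finset.range n, (1 + p j)) ^ 2) :
    ∀ t : ℝ, t < 1 → ∃ c : ℝ, 0 < c ∧
      ∀ n : ℕ, (2 : ℝ) ^ (2 * n) ≥ c * Real.exp (Real.log (d n) ^ t) := by
  intro t ht
  have hgrowth : Tendsto (fun n : ℕ => 2 * n * log 2 - log (d n) ^ t) atTop atTop := by
    refine tendsto_atTop_mono' atTop ?_
      (tendsto_natCast_atTop_atTop.atTop_mul_const (log_pos one_lt_two))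
    filter_upwards [eventually_log_rpow_le_mul_log_two hmono hrange hdens hd ht] with n hn
    linarith
  rw [← Nat.cofinite_eq_atTop] at hgrowth
  obtain ⟨n₀, hn₀⟩ := (tendsto_exp_atTop.comp hgrowth).exists_forall_le
  refine ⟨exp (2 * n₀ * log 2 - log (d n₀) ^ t), exp_pos _, fun n => ?_⟩
  calc exp (2 * n₀ * log 2 - log (d n₀) ^ t) * exp (log (d n) ^ t)
      ≤ exp (2 * n * log 2 - log (d n) ^ t) * exp (log (d n) ^ t) :=
        mul_le_mul_of_nonneg_right (hn₀ n) (exp_pos _).le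
    _ = (2 : ℝ) ^ (2 * n) := by
      rw [← exp_add, sub_add_cancel, ← rpow_natCast, rpow_def_of_pos two_pos]
      push_cast
      ring_nf

/-- Let `p 0 < p 1 < ⋯` enumerate a set `P` of primes of natural density `1/4`
in increasing order, and let `d n = (∏_{j<n} (1 + p j))²`.  Then for every
`t < 1` there is a constant `c_t > 0` with
`2^(2n) ≥ c_t · exp((log d n)^t)` for all `n`. -/
theorem two_pow_ge_exp_log_pow_of_density_quarter
    (P : Set ℕ) [DecidablePred (· ∈ P)] (hprime : ∀ q ∈ P, q.Prime)
    (hdens : Tendsto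
      (fun N : ℕ => (((Finset.range (N + 1)).filter (· ∈ P)).card : ℝ)
        / (Nat.primeCounting N : ℝ)) atTop (nhds (1 / 4)))
    (p : ℕ → ℕ) (hmono : StrictMono p) (hrange : Set.range p = P)
    (d : ℕ → ℕ) (hd : ∀ n, d n = (∏ j ∈ Finset.range n, (1 + p j)) ^ 2) :
    ∀ t : ℝ, t < 1 → ∃ c : ℝ, 0 < c ∧
      ∀ n : ℕ, (2 : ℝ) ^ (2 * n) ≥ c * Real.exp (Real.log (d n) ^ t) :=
  two_pow_ge_exp_log_pow_of_density_quarter_general P hdens p hmono hrange d hd
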